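/- arXiv:1412.3032 — 2 statements merged into one kernel-verified Lean document; each statement's English description precedes it below -/
import Mathlib

section
/- Let p be a prime and R a commutative ring with pR = 0. Then the restriction map Res : 𝒲_n(R) → W_n(R) is an isomorphism, where 𝒲_n(R) is the image of the ring homomorphism (Res, F) : W_{n+1}(R) → W_n(R) × W_n(R) and Res denotes projection to the first factor. -/
/-! When `pR = 0` the Frobenius of Witt vectors raises every coordinate to the `p`-th power, so the
first `n` coordinates of `F ξ` only depend on the first `n` coordinates of `ξ`, that is, on
`Res ξ`. Hence `𝒲_n(R)` is the graph of a map `W_n(R) → W_n(R)`, and a graph projects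
bijectively onto its domain because `Res` is surjective. -/

/-- The restriction map `W_{n+1}(R) → W_n(R)` on truncated Witt vectors. -/
noncomputable def WittRes (p : ℕ) [Fact p.Prime] (n : ℕ) (R : Type*) [CommRing R] :
    TruncatedWittVector p (n + 1) R →+* TruncatedWittVector p n R :=
  TruncatedWittVector.truncate (Nat.le_succ n)

/-- The Frobenius `W_{n+1}(R) → W_n(R)` on truncated Witt vectors, via a lift to
(untruncated) Witt vectors. -/
noncomputable def WittFrob (p : ℕ) [Fact p.Prime] (n : ℕ) (R : Type*) [CommRing R]
    (x : TruncatedWittVector p (n + 1) R) : TruncatedWittVector p n R :=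
  WittVector.truncate n (WittVector.frobenius x.out)

/-- `𝒲_n(R)`, the image of `(Res, F)` in `W_n(R) × W_n(R)`. -/
noncomputable def WcalSet (p : ℕ) [Fact p.Prime] (n : ℕ) (R : Type*) [CommRing R] :
    Set (TruncatedWittVector p n R × TruncatedWittVector p n R) :=
  Set.range (fun x : TruncatedWittVector p (n + 1) R => (WittRes p n R x, WittFrob p n R x))

theorem Function.bijective_fst_range_prodMk {α β γ : Type*} {f : α → β} {g : α → γ}
    (hf : Function.Surjective f) (hg : ∀ x y, f x = f y → g x = g y) :
    Function.Bijective (fun z : Set.range (fun x => (f x, g x)) => z.val.1) := by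
  refine ⟨?_, fun b => ?_⟩
  · rintro ⟨_, x, rfl⟩ ⟨_, y, rfl⟩ (hxy : f x = f y)
    exact Subtype.ext (Prod.ext hxy (hg x y hxy))
  · obtain ⟨x, rfl⟩ := hf b
    exact ⟨⟨_, x, rfl⟩, rfl⟩

section WittRes

variable {p : ℕ} [Fact p.Prime] {n : ℕ} {R : Type*} [CommRing R]

theorem wittRes_surjective : Function.Surjective (WittRes p n R) :=
  TruncatedWittVector.truncate_surjective (Nat.le_succ n)

theorem coeff_wittRes (x : TruncatedWittVector p (n + 1) R) (i : Fin n) :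
    (WittRes p n R x).coeff i = x.coeff i.castSucc :=
  TruncatedWittVector.coeff_truncate _ i x

theorem coeff_wittFrob (hpR : (p : R) = 0) (x : TruncatedWittVector p (n + 1) R) (i : Fin n) :
    (WittFrob p n R x).coeff i = (WittRes p n R x).coeff i ^ p := by
  rcases subsingleton_or_nontrivial R with hR | hR
  · exact Subsingleton.elim _ _
  have : CharP R p := (CharP.charP_iff_prime_eq_zero Fact.out).2 hpR
  rw [WittFrob, WittVector.coeff_truncate, WittVector.coeff_frobenius_charP, coeff_wittRes,
    ← TruncatedWittVector.coeff_out]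
  rfl

theorem wittFrob_eq_of_wittRes_eq (hpR : (p : R) = 0) {x y : TruncatedWittVector p (n + 1) R}
    (h : WittRes p n R x = WittRes p n R y) : WittFrob p n R x = WittFrob p n R y := by
  ext i
  rw [coeff_wittFrob hpR, coeff_wittFrob hpR, h]

end WittRes

theorem stmt1 (p : ℕ) [Fact p.Prime] (n : ℕ) (R : Type*) [CommRing R]
    (hpR : (p : R) = 0) :
    Function.Bijective (fun z : WcalSet p n R => z.val.1) :=
  Function.bijective_fst_range_prodMk wittRes_surjective
    fun _ _ => wittFrob_eq_of_wittRes_eq hpR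
end

section
/- Let p be a prime, n ≥ 1, and S a commutative ring with an ideal 𝔞 ⊆ S equipped with divided powers, such that p is nilpotent in S. The divided Witt polynomials define an isomorphism of W_{n+1}(S)-modules W_{n+1}(𝔞) ≅ ∏_{i=0}^{n} 𝔞_{[w_i]}, where 𝔞_{[w_i]} denotes 𝔞 with the W_{n+1}(S)-module structure given by scalar multiplication through the i-th Witt polynomial w_i : W_{n+1}(S) → S. -/
/-- The `i`-th ghost (Witt polynomial) component of a truncated Witt vector, defined via a lift;
for `i < n` it only depends on the first `i + 1` coefficients, so this is well defined. -/
noncomputable def ghostT (p : ℕ) [Fact p.Prime] {n : ℕ} {S : Type*} [CommRing S]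
    (i : Fin n) (x : TruncatedWittVector p n S) : S :=
  WittVector.ghostComponent (i : ℕ) x.out

/-!
The divided Witt polynomial `w'_i(a) = ∑_{j ≤ i} (p^(i-j) - 1)! γ_{p^(i-j)}(a_j)` is `a_i` plus a
function of `a_0, …, a_{i-1}`, so `(w'_0, …, w'_n)` is bijective by triangular recursion, and
`p^i w'_i = w_i` because `p^k (p^k - 1)! γ_{p^k}(a) = (p^k)! γ_{p^k}(a) = a^(p^k)`.

Additivity and `W(S)`-linearity cannot be deduced from `p^i w'_i = w_i` in `S`, where `p` need not
be a non-zero-divisor. They are identities between divided power polynomials in the Witt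
coordinates, so it suffices to check them universally: integer combinations of divided monomials
embed into `ℚ[X]` and evaluate into `S`, both compatibly with products and divided powers. In
`ℚ[X]` one may cancel `p^i`, and the identities become the additivity and multiplicativity of the
ghost components.
-/

open Finset MvPolynomial Nat

namespace DividedPowers

variable {A : Type*} [CommRing A] {I : Ideal A} (hI : DividedPowers I) (p : ℕ)

noncomputable def dividedGhost (a : ℕ → A) (i : ℕ) : A :=
  ∑ j ∈ range (i + 1), ((p ^ (i - j) - 1)! : A) * hI.dpow (p ^ (i - j)) (a j)

variable {hI p}

theorem dividedGhost_mem (hp : p ≠ 0) {a : ℕ → A} (ha : ∀ j, a j ∈ I) (i : ℕ) :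
    hI.dividedGhost p a i ∈ I :=
  Ideal.sum_mem I fun j _ => I.mul_mem_left _ (hI.dpow_mem (pow_ne_zero _ hp) (ha j))

theorem dividedGhost_congr {a b : ℕ → A} {i : ℕ} (h : ∀ j ≤ i, a j = b j) :
    hI.dividedGhost p a i = hI.dividedGhost p b i :=
  sum_congr rfl fun j hj => by rw [h j (Nat.lt_succ_iff.mp (mem_range.mp hj))]

theorem dividedGhost_eq_add_sum {a : ℕ → A} {i : ℕ} (hai : a i ∈ I) :
    hI.dividedGhost p a i =
      a i + ∑ j ∈ range i, ((p ^ (i - j) - 1)! : A) * hI.dpow (p ^ (i - j)) (a j) := by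
  rw [dividedGhost, sum_range_succ, add_comm, Nat.sub_self, pow_zero, hI.dpow_one hai]
  simp

theorem pow_mul_dividedGhost (hp : p ≠ 0) {a : ℕ → A} (ha : ∀ j, a j ∈ I) (i : ℕ) :
    (p : A) ^ i * hI.dividedGhost p a i = aeval a (wittPolynomial p ℤ i) := by
  rw [aeval_wittPolynomial, dividedGhost, mul_sum]
  refine sum_congr rfl fun j hj => ?_
  calc (p : A) ^ i * (((p ^ (i - j) - 1)! : A) * hI.dpow (p ^ (i - j)) (a j))
      = (p : A) ^ j *
          (((p ^ (i - j) * (p ^ (i - j) - 1)! : ℕ) : A) * hI.dpow (p ^ (i - j)) (a j)) := by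
        rw [← pow_mul_pow_sub _ (Nat.lt_succ_iff.mp (mem_range.mp hj))]
        push_cast
        ring
    _ = (p : A) ^ j * a j ^ p ^ (i - j) := by
        rw [Nat.mul_factorial_pred (pow_ne_zero _ hp), hI.factorial_mul_dpow_eq_pow (ha j)]

theorem eq_of_dividedGhost_eq {a b : ℕ → A} (ha : ∀ j, a j ∈ I) (hb : ∀ j, b j ∈ I) {N : ℕ}
    (h : ∀ k < N, hI.dividedGhost p a k = hI.dividedGhost p b k) : ∀ k < N, a k = b k := by
  intro k
  induction k using Nat.strong_induction_on with
  | _ k ih =>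
    intro hk
    have hab := h k hk
    rw [dividedGhost_eq_add_sum (ha k), dividedGhost_eq_add_sum (hb k),
      sum_congr rfl fun j hj => by rw [ih j (mem_range.mp hj) ((mem_range.mp hj).trans hk)]] at hab
    exact add_right_cancel hab

theorem exists_dividedGhost_eq (hp : p ≠ 0) {b : ℕ → A} (hb : ∀ j, b j ∈ I) (N : ℕ) :
    ∃ a : ℕ → A, (∀ j, a j ∈ I) ∧ ∀ k < N, hI.dividedGhost p a k = b k := by
  induction N with
  | zero => exact ⟨0, fun _ => I.zero_mem, by simp⟩
  | succ N ih =>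
    obtain ⟨a, ha, hab⟩ := ih
    -- correct the `N`-th coordinate; the earlier divided Witt polynomials do not see it
    let a' := Function.update a N (a N + (b N - hI.dividedGhost p a N))
    have ha' : ∀ j, a' j ∈ I := fun j => by
      rcases eq_or_ne j N with rfl | hj
      · simpa [a'] using I.add_mem (ha j) (I.sub_mem (hb j) (dividedGhost_mem hp ha j))
      · simpa [a', hj] using ha j
    refine ⟨a', ha', fun k hk => ?_⟩
    rcases Nat.lt_succ_iff_lt_or_eq.mp hk with hk | rfl
    · rw [← hab k hk]
      exact dividedGhost_congr fun j hj => Function.update_of_ne (by omega) _ _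
    · have hsum : ∀ j ∈ range k, a' j = a j := fun j hj =>
        Function.update_of_ne (mem_range.mp hj).ne ..
      have hk' : a' k = a k + (b k - hI.dividedGhost p a k) := Function.update_self ..
      rw [dividedGhost_eq_add_sum (ha' k), sum_congr rfl fun j hj => by rw [hsum j hj], hk',
        dividedGhost_eq_add_sum (ha k)]
      ring

end DividedPowers

theorem MvPolynomial.mem_ideal_span_X_image_of_aeval_eq_zero {R V : Type*} [CommRing R]
    {P : V → Prop} [DecidablePred P] {f : MvPolynomial V R}
    (h : aeval (fun v => if P v then 0 else (X v : MvPolynomial V R)) f = 0) :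
    f ∈ Ideal.span (X '' {v | P v} : Set (MvPolynomial V R)) := by
  set π := Ideal.Quotient.mkₐ R (Ideal.span (X '' {v | P v} : Set (MvPolynomial V R)))
  have hX : (fun v => π (if P v then 0 else X v)) = fun v => π (X v) := by
    funext v
    split_ifs with hv
    · exact (map_zero π).trans
        (Ideal.Quotient.eq_zero_iff_mem.mpr (Ideal.subset_span (Set.mem_image_of_mem X hv))).symm
    · rfl
  rw [← Ideal.Quotient.eq_zero_iff_mem, ← Ideal.Quotient.mkₐ_eq_mk R, ← aeval_X_left_apply f,
    comp_aeval_apply, ← hX, ← comp_aeval_apply, h, map_zero]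

theorem MvPolynomial.aeval_mem_of_mem_ideal_span_X_image {R V S : Type*} [CommRing R] [CommRing S]
    [Algebra R S] {I : Ideal S} {s : Set V} {σ : V → S} (hσ : ∀ v ∈ s, σ v ∈ I)
    {f : MvPolynomial V R} (hf : f ∈ Ideal.span (X '' s : Set (MvPolynomial V R))) :
    aeval σ f ∈ I := by
  refine (Ideal.span_le.mpr ?_ hf : f ∈ I.comap (aeval σ))
  rintro _ ⟨v, hv, rfl⟩
  simpa using hσ v hv

-- `e` stands for `∑ e m • X^[m]`, where in the divided monomial `X^[m]` the variables `v` with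
-- `P v` carry divided powers: `X^[m] = ∏_{P v} X_v^(m v) / (m v)! * ∏_{¬ P v} X_v^(m v)`.
abbrev DividedPolynomial (V : Type*) := (V →₀ ℕ) →₀ ℤ

namespace DividedPolynomial

variable {V : Type*} (P : V → Prop) [DecidablePred P]

def divFactorial (m : V →₀ ℕ) : ℕ := m.prod fun v k => if P v then k ! else 1

noncomputable def divBinom (m₁ m₂ : V →₀ ℕ) : ℕ :=
  (m₁ + m₂).prod fun v k => if P v then k.choose (m₁ v) else 1

theorem divFactorial_pos (m : V →₀ ℕ) : 0 < divFactorial P m :=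
  prod_pos fun v _ => by dsimp only; split <;> positivity

theorem divFactorial_single {v : V} (hv : P v) (k : ℕ) : divFactorial P (.single v k) = k ! := by
  rw [divFactorial, Finsupp.prod_single_index (by simp), if_pos hv]

theorem divFactorial_add (m₁ m₂ : V →₀ ℕ) :
    divFactorial P (m₁ + m₂) = divBinom P m₁ m₂ * (divFactorial P m₁ * divFactorial P m₂) := by
  have h₁ := Finsupp.support_mono (le_self_add : m₁ ≤ m₁ + m₂)
  have h₂ := Finsupp.support_mono (le_add_self : m₂ ≤ m₁ + m₂)
  rw [divFactorial, divFactorial, divFactorial, divBinom,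
    Finsupp.prod_of_support_subset m₁ h₁ _ (by simp),
    Finsupp.prod_of_support_subset m₂ h₂ _ (by simp),
    Finsupp.prod, Finsupp.prod, ← prod_mul_distrib, ← prod_mul_distrib]
  refine prod_congr rfl fun v _ => ?_
  split_ifs
  · rw [Finsupp.add_apply, ← add_choose_mul_factorial_mul_factorial, choose_symm_add, mul_assoc]
  · rfl

noncomputable def toMvPolynomial : DividedPolynomial V →ₗ[ℤ] MvPolynomial V ℚ :=
  Finsupp.linearCombination ℤ fun m => monomial m (divFactorial P m : ℚ)⁻¹

theorem toMvPolynomial_single (m : V →₀ ℕ) (k : ℤ) :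
    toMvPolynomial P (.single m k) = monomial m ((k : ℚ) / divFactorial P m) := by
  rw [toMvPolynomial, Finsupp.linearCombination_single, ← Int.cast_smul_eq_zsmul ℚ,
    smul_monomial, smul_eq_mul, div_eq_mul_inv]

theorem coeff_toMvPolynomial (e : DividedPolynomial V) (m : V →₀ ℕ) :
    coeff m (toMvPolynomial P e) = e m / divFactorial P m := by
  induction e using Finsupp.induction_linear with
  | zero => simp
  | add e f he hf => simp [he, hf, add_div]
  | single m' k =>
    classical
    rw [toMvPolynomial_single, coeff_monomial, Finsupp.single_apply]
    split_ifs <;> simp_all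

theorem toMvPolynomial_injective : Function.Injective (toMvPolynomial P (V := V)) := by
  intro e f h
  ext m
  have hm := congrArg (coeff m) h
  rwa [coeff_toMvPolynomial, coeff_toMvPolynomial,
    div_left_inj' (by exact_mod_cast (divFactorial_pos P m).ne'), Int.cast_inj] at hm

noncomputable def mul (e f : DividedPolynomial V) : DividedPolynomial V :=
  e.sum fun m₁ k₁ => f.sum fun m₂ k₂ => .single (m₁ + m₂) (k₁ * k₂ * divBinom P m₁ m₂)

theorem map_mul_of_map_single {R : Type*} [Ring R] (T : DividedPolynomial V →ₗ[ℤ] R)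
    (hT : ∀ m₁ m₂, T (.single (m₁ + m₂) (divBinom P m₁ m₂)) = T (.single m₁ 1) * T (.single m₂ 1))
    (e f : DividedPolynomial V) : T (mul P e f) = T e * T f := by
  have hsingle (m : V →₀ ℕ) (k : ℤ) : T (.single m k) = k • T (.single m 1) := by
    rw [← map_zsmul, Finsupp.smul_single_one]
  conv_rhs => rw [← e.sum_single, ← f.sum_single, map_finsuppSum, map_finsuppSum,
    Finsupp.sum_mul]
  simp only [mul, map_finsuppSum, Finsupp.mul_sum]
  refine Finsupp.sum_congr fun m₁ _ => Finsupp.sum_congr fun m₂ _ => ?_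
  rw [← smul_eq_mul (e m₁ * f m₂), ← Finsupp.smul_single, map_zsmul, hT, hsingle m₁ (e m₁),
    hsingle m₂ (f m₂), smul_mul_smul_comm]

theorem toMvPolynomial_mul (e f : DividedPolynomial V) :
    toMvPolynomial P (mul P e f) = toMvPolynomial P e * toMvPolynomial P f := by
  refine map_mul_of_map_single P _ (fun m₁ m₂ => ?_) e f
  have h₁ := (divFactorial_pos P m₁).ne'
  have h₂ := (divFactorial_pos P m₂).ne'
  have h₁₂ := left_ne_zero_of_mul (divFactorial_add P m₁ m₂ ▸ (divFactorial_pos P _).ne')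
  rw [toMvPolynomial_single, toMvPolynomial_single, toMvPolynomial_single, monomial_mul,
    divFactorial_add]
  congr 1
  push_cast
  field_simp

noncomputable def ofMvPolynomial (f : MvPolynomial V ℤ) : DividedPolynomial V :=
  ∑ m ∈ f.support, .single m (coeff m f * divFactorial P m)

theorem toMvPolynomial_ofMvPolynomial (f : MvPolynomial V ℤ) :
    toMvPolynomial P (ofMvPolynomial P f) = map (Int.castRingHom ℚ) f := by
  conv_rhs => rw [f.as_sum, map_sum]
  refine (map_sum _ _ _).trans (sum_congr rfl fun m _ => ?_)
  have hm : (divFactorial P m : ℚ) ≠ 0 := by exact_mod_cast (divFactorial_pos P m).ne'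
  rw [toMvPolynomial_single, map_monomial, Int.cast_mul, Int.cast_natCast,
    mul_div_cancel_right₀ _ hm]
  rfl

variable {S : Type*} [CommRing S] {I : Ideal S} (hI : DividedPowers I) (σ : V → S)

noncomputable def dividedMonomial (m : V →₀ ℕ) : S :=
  m.prod fun v k => if P v then hI.dpow k (σ v) else σ v ^ k

noncomputable def eval : DividedPolynomial V →ₗ[ℤ] S :=
  Finsupp.linearCombination ℤ (dividedMonomial P hI σ)

theorem eval_single (m : V →₀ ℕ) (k : ℤ) :
    eval P hI σ (.single m k) = k * dividedMonomial P hI σ m := by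
  rw [eval, Finsupp.linearCombination_single, zsmul_eq_mul]

variable {P σ}

theorem dividedMonomial_mul (hσ : ∀ v, P v → σ v ∈ I) (m₁ m₂ : V →₀ ℕ) :
    dividedMonomial P hI σ m₁ * dividedMonomial P hI σ m₂ =
      divBinom P m₁ m₂ * dividedMonomial P hI σ (m₁ + m₂) := by
  set g : V → ℕ → S := fun v k => if P v then hI.dpow k (σ v) else σ v ^ k
  have h₀ : ∀ v ∈ (m₁ + m₂).support, g v 0 = 1 := fun v _ => by
    by_cases hv : P v
    · simp [g, hv, hI.dpow_zero (hσ v hv)]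
    · simp [g, hv]
  rw [dividedMonomial, dividedMonomial, dividedMonomial, divBinom,
    Finsupp.prod_of_support_subset m₁ (Finsupp.support_mono le_self_add) g h₀,
    Finsupp.prod_of_support_subset m₂ (Finsupp.support_mono le_add_self) g h₀]
  simp only [Finsupp.prod, Nat.cast_prod, ← prod_mul_distrib]
  refine prod_congr rfl fun v _ => ?_
  simp only [g, Finsupp.add_apply]
  split_ifs with hv
  · rw [hI.mul_dpow (hσ v hv)]
  · rw [Nat.cast_one, one_mul, pow_add]

theorem eval_mul (hσ : ∀ v, P v → σ v ∈ I) (e f : DividedPolynomial V) :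
    eval P hI σ (mul P e f) = eval P hI σ e * eval P hI σ f := by
  refine map_mul_of_map_single P _ (fun m₁ m₂ => ?_) e f
  simp only [eval_single, Int.cast_one, one_mul, dividedMonomial_mul hI hσ, Int.cast_natCast]

theorem divFactorial_mul_dividedMonomial (hσ : ∀ v, P v → σ v ∈ I) (m : V →₀ ℕ) :
    (divFactorial P m : S) * dividedMonomial P hI σ m = m.prod fun v k => σ v ^ k := by
  simp only [divFactorial, dividedMonomial, Finsupp.prod, Nat.cast_prod, ← prod_mul_distrib]
  refine prod_congr rfl fun v _ => ?_
  split_ifs with hv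
  · exact hI.factorial_mul_dpow_eq_pow (hσ v hv)
  · rw [Nat.cast_one, one_mul]

theorem eval_ofMvPolynomial (hσ : ∀ v, P v → σ v ∈ I) (f : MvPolynomial V ℤ) :
    eval P hI σ (ofMvPolynomial P f) = aeval σ f := by
  rw [aeval_def, eval₂_eq, ofMvPolynomial, map_sum]
  refine sum_congr rfl fun m _ => ?_
  rw [eval_single, Int.cast_mul, Int.cast_natCast, mul_assoc,
    divFactorial_mul_dividedMonomial hI hσ]
  rfl

theorem exists_eval_eq_dpow (hQ : DividedPowers (⊤ : Ideal (MvPolynomial V ℚ)))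
    (hσ : ∀ v, P v → σ v ∈ I) {f : MvPolynomial V ℤ}
    (hf : f ∈ Ideal.span (X '' {v | P v} : Set (MvPolynomial V ℤ))) (k : ℕ) :
    ∃ e, toMvPolynomial P e = hQ.dpow k (map (Int.castRingHom ℚ) f) ∧
      eval P hI σ e = hI.dpow k (aeval σ f) := by
  induction hf using Submodule.span_induction generalizing k with
  | mem _ hv =>
    obtain ⟨v, hv, rfl⟩ := hv
    refine ⟨.single (.single v k) 1, ?_, ?_⟩
    · rw [toMvPolynomial_single, divFactorial_single P hv, map_X,
        DividedPowers.RatAlgebra.dpow_eq_inv_fact_smul _ hQ Submodule.mem_top, X_pow_eq_monomial,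
        smul_monomial, Ring.inverse_eq_inv', smul_eq_mul, mul_one, Int.cast_one, one_div]
    · rw [eval_single, Int.cast_one, one_mul, aeval_X, dividedMonomial,
        Finsupp.prod_single_index (by simp [hI.dpow_zero (hσ v hv)])]
      exact if_pos hv
  | zero =>
    rcases eq_or_ne k 0 with rfl | hk
    · refine ⟨ofMvPolynomial P 1, ?_, ?_⟩
      · rw [toMvPolynomial_ofMvPolynomial, map_one, hQ.dpow_zero Submodule.mem_top]
      · rw [eval_ofMvPolynomial hI hσ, map_one, map_zero, hI.dpow_zero I.zero_mem]
    · exact ⟨0, by simp [hQ.dpow_eval_zero hk], by simp [hI.dpow_eval_zero hk]⟩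
  | add f g hf hg ihf ihg =>
    choose ef hef₁ hef₂ using ihf
    choose eg heg₁ heg₂ using ihg
    refine ⟨∑ ij ∈ antidiagonal k, mul P (ef ij.1) (eg ij.2), ?_, ?_⟩
    · simp only [map_sum, toMvPolynomial_mul, hef₁, heg₁, map_add,
        hQ.dpow_add Submodule.mem_top Submodule.mem_top]
    · simp only [map_sum, eval_mul hI hσ, hef₂, heg₂, map_add,
        hI.dpow_add (aeval_mem_of_mem_ideal_span_X_image hσ hf)
          (aeval_mem_of_mem_ideal_span_X_image hσ hg)]
  | smul r f hf ihf =>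
    obtain ⟨e, he₁, he₂⟩ := ihf k
    refine ⟨mul P (ofMvPolynomial P (r ^ k)) e, ?_, ?_⟩
    · rw [toMvPolynomial_mul, toMvPolynomial_ofMvPolynomial, he₁, smul_eq_mul, map_mul,
        hQ.dpow_mul Submodule.mem_top, map_pow]
    · rw [eval_mul hI hσ, eval_ofMvPolynomial hI hσ, he₂, smul_eq_mul, map_mul,
        hI.dpow_mul (aeval_mem_of_mem_ideal_span_X_image hσ hf), map_pow]

theorem exists_eval_eq_dividedGhost {p : ℕ} (hp : p ≠ 0) (hσ : ∀ v, P v → σ v ∈ I)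
    {Q : ℕ → MvPolynomial V ℤ}
    (hQ : ∀ j, Q j ∈ Ideal.span (X '' {v | P v} : Set (MvPolynomial V ℤ))) (i : ℕ) :
    ∃ e, (p : MvPolynomial V ℚ) ^ i * toMvPolynomial P e =
        map (Int.castRingHom ℚ) (aeval Q (wittPolynomial p ℤ i)) ∧
      eval P hI σ e = hI.dividedGhost p (fun j => aeval σ (Q j)) i := by
  classical
  let hℚ := DividedPowers.RatAlgebra.dividedPowers (⊤ : Ideal (MvPolynomial V ℚ))
  choose E hE₁ hE₂ using fun j => exists_eval_eq_dpow hI hℚ hσ (hQ j) (p ^ (i - j))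
  refine ⟨∑ j ∈ range (i + 1), ((p ^ (i - j) - 1)! : ℤ) • E j, ?_, ?_⟩
  · have h : toMvPolynomial P (∑ j ∈ range (i + 1), ((p ^ (i - j) - 1)! : ℤ) • E j) =
        hℚ.dividedGhost p (fun j => map (Int.castRingHom ℚ) (Q j)) i := by
      simp only [map_sum, map_zsmul, hE₁, DividedPowers.dividedGhost, zsmul_eq_mul,
        Int.cast_natCast]
    rw [h, DividedPowers.pow_mul_dividedGhost hp fun _ => Submodule.mem_top]
    exact (comp_aeval_apply Q (map (Int.castRingHom ℚ)).toIntAlgHom _).symm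
  · simp only [map_sum, map_zsmul, hE₂, DividedPowers.dividedGhost, zsmul_eq_mul, Int.cast_natCast]

theorem eval_eq_of_pow_mul_toMvPolynomial_eq {p : ℕ} (hp : p ≠ 0) {i : ℕ}
    {e e' : DividedPolynomial V}
    (h : (p : MvPolynomial V ℚ) ^ i * toMvPolynomial P e =
      (p : MvPolynomial V ℚ) ^ i * toMvPolynomial P e') :
    eval P hI σ e = eval P hI σ e' := by
  rw [toMvPolynomial_injective P (mul_left_cancel₀ (pow_ne_zero i (Nat.cast_ne_zero.mpr hp)) h)]

end DividedPolynomial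

namespace WittVector

open DividedPolynomial

variable {p : ℕ} [hp : Fact p.Prime] {S : Type*} [CommRing S] {I : Ideal S} (hI : DividedPowers I)

theorem wittAdd_mem_ideal_span_X (j : ℕ) :
    wittAdd p j ∈ Ideal.span (X '' {_v | True} : Set (MvPolynomial (Fin 2 × ℕ) ℤ)) := by
  refine mem_ideal_span_X_image_of_aeval_eq_zero ?_
  have h := (add_coeff (0 : WittVector p (MvPolynomial (Fin 2 × ℕ) ℤ)) 0 j).symm
  have hσ : Function.uncurry ![(0 : WittVector p _).coeff, (0 : WittVector p _).coeff] =
      fun v => if True then 0 else (X v : MvPolynomial (Fin 2 × ℕ) ℤ) := by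
    funext ⟨b, k⟩
    fin_cases b <;> simp
  rwa [add_zero, zero_coeff, peval, hσ] at h

theorem wittMul_mem_ideal_span_X (j : ℕ) :
    wittMul p j ∈ Ideal.span (X '' {v | v.1 = 1} : Set (MvPolynomial (Fin 2 × ℕ) ℤ)) := by
  refine mem_ideal_span_X_image_of_aeval_eq_zero ?_
  have h := (mul_coeff (mk p fun k => (X (0, k) : MvPolynomial (Fin 2 × ℕ) ℤ)) 0 j).symm
  have hσ : Function.uncurry ![(mk p fun k => (X (0, k) : MvPolynomial (Fin 2 × ℕ) ℤ)).coeff,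
      (0 : WittVector p _).coeff] = fun v => if v.1 = 1 then 0 else X v := by
    funext ⟨b, k⟩
    fin_cases b <;> simp
  rwa [mul_zero, zero_coeff, peval, hσ] at h

theorem aeval_wittAdd_wittPolynomial (i : ℕ) :
    aeval (wittAdd p) (wittPolynomial p ℤ i) =
      rename (Prod.mk 0) (wittPolynomial p ℤ i) + rename (Prod.mk 1) (wittPolynomial p ℤ i) := by
  have h := wittStructureInt_prop p (X 0 + X 1 : MvPolynomial (Fin 2) ℤ) i
  rwa [map_add, bind₁_X_right, bind₁_X_right] at h

theorem aeval_wittMul_wittPolynomial (i : ℕ) :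
    aeval (wittMul p) (wittPolynomial p ℤ i) =
      rename (Prod.mk 0) (wittPolynomial p ℤ i) * rename (Prod.mk 1) (wittPolynomial p ℤ i) := by
  have h := wittStructureInt_prop p (X 0 * X 1 : MvPolynomial (Fin 2) ℤ) i
  rwa [map_mul, bind₁_X_right, bind₁_X_right] at h

theorem dividedGhost_coeff_add {x y : WittVector p S} (hx : ∀ j, x.coeff j ∈ I)
    (hy : ∀ j, y.coeff j ∈ I) (i : ℕ) :
    hI.dividedGhost p (x + y).coeff i =
      hI.dividedGhost p x.coeff i + hI.dividedGhost p y.coeff i := by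
  set σ : Fin 2 × ℕ → S := Function.uncurry ![x.coeff, y.coeff]
  have hσ : ∀ v, True → σ v ∈ I := by
    rintro ⟨b, k⟩ -
    fin_cases b
    exacts [hx k, hy k]
  have hX (b : Fin 2) (j : ℕ) :
      (X ∘ Prod.mk b) j ∈ Ideal.span (X '' {_v | True} : Set (MvPolynomial (Fin 2 × ℕ) ℤ)) :=
    Ideal.subset_span ⟨_, trivial, rfl⟩
  obtain ⟨e, he, hxy⟩ :=
    exists_eval_eq_dividedGhost hI hp.out.ne_zero hσ (wittAdd_mem_ideal_span_X (p := p)) i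
  obtain ⟨e₀, he₀, hx'⟩ := exists_eval_eq_dividedGhost hI hp.out.ne_zero hσ (hX 0) i
  obtain ⟨e₁, he₁, hy'⟩ := exists_eval_eq_dividedGhost hI hp.out.ne_zero hσ (hX 1) i
  have hcoeff : (x + y).coeff = fun j => aeval σ (wittAdd p j) := funext (add_coeff x y)
  rw [hcoeff, ← hxy, eval_eq_of_pow_mul_toMvPolynomial_eq hI hp.out.ne_zero (e' := e₀ + e₁),
    map_add, hx', hy']
  · simp [σ]
  · rw [he, map_add, mul_add, he₀, he₁, ← map_add, aeval_wittAdd_wittPolynomial, rename_eq_aeval,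
      rename_eq_aeval]

theorem dividedGhost_coeff_mul (ξ : WittVector p S) {x : WittVector p S} (hx : ∀ j, x.coeff j ∈ I)
    (i : ℕ) :
    hI.dividedGhost p (ξ * x).coeff i = ghostComponent i ξ * hI.dividedGhost p x.coeff i := by
  set σ : Fin 2 × ℕ → S := Function.uncurry ![ξ.coeff, x.coeff]
  have hσ : ∀ v : Fin 2 × ℕ, v.1 = 1 → σ v ∈ I := by
    rintro ⟨b, k⟩ (rfl : b = 1)
    exact hx k
  have hX (j : ℕ) :
      (X ∘ Prod.mk 1) j ∈ Ideal.span (X '' {v | v.1 = 1} : Set (MvPolynomial (Fin 2 × ℕ) ℤ)) :=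
    Ideal.subset_span ⟨_, rfl, rfl⟩
  obtain ⟨e, he, hξx⟩ :=
    exists_eval_eq_dividedGhost hI hp.out.ne_zero hσ (wittMul_mem_ideal_span_X (p := p)) i
  obtain ⟨e₁, he₁, hx'⟩ := exists_eval_eq_dividedGhost hI hp.out.ne_zero hσ hX i
  set w := ofMvPolynomial (fun v : Fin 2 × ℕ => v.1 = 1) (rename (Prod.mk 0) (wittPolynomial p ℤ i))
  have hcoeff : (ξ * x).coeff = fun j => aeval σ (wittMul p j) := funext (mul_coeff ξ x)
  rw [hcoeff, ← hξx,
    eval_eq_of_pow_mul_toMvPolynomial_eq hI hp.out.ne_zero (e' := mul (fun v => v.1 = 1) w e₁),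
    eval_mul hI hσ, eval_ofMvPolynomial hI hσ, hx', aeval_rename, ghostComponent_apply]
  · simp [σ, Function.comp_def]
  · rw [he, toMvPolynomial_mul, toMvPolynomial_ofMvPolynomial, mul_left_comm, he₁, ← map_mul,
      aeval_wittMul_wittPolynomial, rename_eq_aeval (Prod.mk 1)]

end WittVector

namespace TruncatedWittVector

variable {p n : ℕ} {S : Type*} [CommRing S] {I : Ideal S} (hI : DividedPowers I)

theorem coeff_out_mem {x : TruncatedWittVector p n S} (hx : ∀ i, x.coeff i ∈ I)
    (k : ℕ) : x.out.coeff k ∈ I := by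
  by_cases hk : k < n
  · rw [← Fin.val_mk hk, coeff_out]
    exact hx _
  · show (if h : k < n then x.coeff ⟨k, h⟩ else 0) ∈ I
    rw [dif_neg hk]
    exact I.zero_mem

theorem eq_of_dividedGhost_out_eq {x y : TruncatedWittVector p n S} (hx : ∀ i, x.coeff i ∈ I)
    (hy : ∀ i, y.coeff i ∈ I)
    (h : ∀ i : Fin n, hI.dividedGhost p x.out.coeff i = hI.dividedGhost p y.out.coeff i) :
    x = y := by
  ext i
  rw [← coeff_out, ← coeff_out]
  exact DividedPowers.eq_of_dividedGhost_eq (coeff_out_mem hx) (coeff_out_mem hy)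
    (fun k hk => h ⟨k, hk⟩) i i.isLt

variable [Fact p.Prime]

theorem truncate_out (x : TruncatedWittVector p n S) : WittVector.truncate n x.out = x :=
  truncateFun_out x

theorem coeff_out_of_truncate_eq {w : WittVector p S} {x : TruncatedWittVector p n S}
    (h : WittVector.truncate n w = x) {j : ℕ} (hj : j < n) : x.out.coeff j = w.coeff j := by
  rw [← Fin.val_mk hj, coeff_out, ← h, WittVector.coeff_truncate]

theorem dividedGhost_out_of_truncate_eq {w : WittVector p S}
    {x : TruncatedWittVector p n S} (h : WittVector.truncate n w = x) {i : ℕ} (hi : i < n) :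
    hI.dividedGhost p x.out.coeff i = hI.dividedGhost p w.coeff i :=
  DividedPowers.dividedGhost_congr fun _ hj => coeff_out_of_truncate_eq h (by omega)

theorem exists_dividedGhost_out_eq {b : Fin n → S} (hb : ∀ i, b i ∈ I) :
    ∃ x : TruncatedWittVector p n S,
      (∀ i, x.coeff i ∈ I) ∧ ∀ i : Fin n, hI.dividedGhost p x.out.coeff i = b i := by
  have hb' : ∀ i, (mk p b).coeff i ∈ I := fun i => by rw [coeff_mk]; exact hb i
  obtain ⟨a, ha, hab⟩ := hI.exists_dividedGhost_eq (Fact.out : p.Prime).ne_zero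
    (coeff_out_mem hb') n
  refine ⟨WittVector.truncate n (WittVector.mk p a), fun i => ?_, fun i => ?_⟩
  · rw [WittVector.coeff_truncate, WittVector.coeff_mk]
    exact ha i
  · rw [dividedGhost_out_of_truncate_eq hI rfl i.isLt, WittVector.coeff_mk, hab i i.isLt,
      coeff_out, coeff_mk]

theorem dividedGhost_out_add {x y : TruncatedWittVector p n S} (hx : ∀ i, x.coeff i ∈ I)
    (hy : ∀ i, y.coeff i ∈ I) {i : ℕ} (hi : i < n) :
    hI.dividedGhost p (x + y).out.coeff i =
      hI.dividedGhost p x.out.coeff i + hI.dividedGhost p y.out.coeff i := by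
  rw [dividedGhost_out_of_truncate_eq hI (w := x.out + y.out)
    (by rw [map_add, truncate_out, truncate_out]) hi]
  exact WittVector.dividedGhost_coeff_add hI (coeff_out_mem hx) (coeff_out_mem hy) i

theorem dividedGhost_out_mul (ξ : TruncatedWittVector p n S) {x : TruncatedWittVector p n S}
    (hx : ∀ i, x.coeff i ∈ I) {i : ℕ} (hi : i < n) :
    hI.dividedGhost p (ξ * x).out.coeff i =
      WittVector.ghostComponent i ξ.out * hI.dividedGhost p x.out.coeff i := by
  rw [dividedGhost_out_of_truncate_eq hI (w := ξ.out * x.out)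
    (by rw [map_mul, truncate_out, truncate_out]) hi]
  exact WittVector.dividedGhost_coeff_mul hI ξ.out (coeff_out_mem hx) i

end TruncatedWittVector

theorem stmt16_general (p : ℕ) [Fact p.Prime] (n : ℕ) (S : Type*) [CommRing S]
    (I : Ideal S) (hI : DividedPowers I) :
    ∃ Φ : {x : TruncatedWittVector p (n + 1) S // ∀ i, x.coeff i ∈ I} → (Fin (n + 1) → I),
      Function.Bijective Φ ∧
      -- `Φ` is additive
      (∀ x y z : {x : TruncatedWittVector p (n + 1) S // ∀ i, x.coeff i ∈ I},
        z.val = x.val + y.val → ∀ i, (Φ z i : S) = (Φ x i : S) + (Φ y i : S)) ∧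
      -- the components of `Φ` are the divided Witt polynomials: `p^i · Φ_i = w_i`
      (∀ (x : {x : TruncatedWittVector p (n + 1) S // ∀ i, x.coeff i ∈ I}) (i : Fin (n + 1)),
        (p : S) ^ (i : ℕ) * (Φ x i : S) = ghostT p i x.val) ∧
      -- `Φ` is `W_{n+1}(S)`-linear, the action on the `i`-th factor being through `w_i`
      (∀ (ξ : TruncatedWittVector p (n + 1) S)
         (x z : {x : TruncatedWittVector p (n + 1) S // ∀ i, x.coeff i ∈ I}),
        z.val = ξ * x.val → ∀ i, (Φ z i : S) = ghostT p i ξ * (Φ x i : S)) := by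
  have hp := (Fact.out : p.Prime).ne_zero
  have hout (x : {x : TruncatedWittVector p (n + 1) S // ∀ i, x.coeff i ∈ I}) :=
    TruncatedWittVector.coeff_out_mem x.2
  refine ⟨fun x i => ⟨hI.dividedGhost p x.1.out.coeff i, hI.dividedGhost_mem hp (hout x) i⟩,
    ⟨fun x y hxy => ?_, fun b => ?_⟩, fun x y z hz i => ?_, fun x i => ?_, fun ξ x z hz i => ?_⟩
  · exact Subtype.ext (TruncatedWittVector.eq_of_dividedGhost_out_eq hI x.2 y.2
      fun i => congrArg (fun f => (f i : S)) hxy)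
  · obtain ⟨x, hx, hxb⟩ :=
      TruncatedWittVector.exists_dividedGhost_out_eq (p := p) hI fun i => (b i).2
    exact ⟨⟨x, hx⟩, funext fun i => Subtype.ext (hxb i)⟩
  · simp only [hz]
    exact TruncatedWittVector.dividedGhost_out_add hI x.2 y.2 i.isLt
  · rw [ghostT, WittVector.ghostComponent_apply]
    exact hI.pow_mul_dividedGhost hp (hout x) i
  · simp only [hz]
    exact TruncatedWittVector.dividedGhost_out_mul hI ξ x.2 i.isLt

theorem stmt16 (p : ℕ) [Fact p.Prime] (n : ℕ) (S : Type*) [CommRing S]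
    (I : Ideal S) (hI : DividedPowers I) (hnil : IsNilpotent (p : S)) :
    ∃ Φ : {x : TruncatedWittVector p (n + 1) S // ∀ i, x.coeff i ∈ I} → (Fin (n + 1) → I),
      Function.Bijective Φ ∧
      -- `Φ` is additive
      (∀ x y z : {x : TruncatedWittVector p (n + 1) S // ∀ i, x.coeff i ∈ I},
        z.val = x.val + y.val → ∀ i, (Φ z i : S) = (Φ x i : S) + (Φ y i : S)) ∧
      -- the components of `Φ` are the divided Witt polynomials: `p^i · Φ_i = w_i`
      (∀ (x : {x : TruncatedWittVector p (n + 1) S // ∀ i, x.coeff i ∈ I}) (i : Fin (n + 1)),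
        (p : S) ^ (i : ℕ) * (Φ x i : S) = ghostT p i x.val) ∧
      -- `Φ` is `W_{n+1}(S)`-linear, the action on the `i`-th factor being through `w_i`
      (∀ (ξ : TruncatedWittVector p (n + 1) S)
         (x z : {x : TruncatedWittVector p (n + 1) S // ∀ i, x.coeff i ∈ I}),
        z.val = ξ * x.val → ∀ i, (Φ z i : S) = ghostT p i ξ * (Φ x i : S)) :=
  stmt16_general p n S I hI
end
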